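/- Let g : [a,b] → ℝ be a C² function with Lipschitz second derivative such that g(a) = g(b) = R > 0, g(x) < R for x ∈ (a,b), and g''(x) ≥ δ > 0 on (a,b). Then there exists C > 0 depending only on R, δ and the C^{2,1}-norm of g such that |g'(a) + g'(b)| < C·g'(a)², provided |g'(a)| is sufficiently small compared to δ. -/

import Mathlib

/-!
Since `g'' ≥ δ`, `g'` increases at rate at least `δ`, and Rolle gives a zero `c` of `g'`.
Comparing `g` with its tangent line at `a` and with the parabola of curvature `δ` at `c` bounds
the width: `δ² (b - a)² ≤ 6 g'(a)²`. On the other hand `g'²/2 - g''(a) g` has derivative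
`g' (g'' - g''(a))`, of size at most `(g'(b) - g'(a)) L (b - a)`, and since `g(a) = g(b)` its
increment from `a` to `b` is `(g'(b)² - g'(a)²)/2`; dividing by `g'(b) - g'(a)` gives
`|g'(a) + g'(b)| ≤ 2 L (b - a)² ≤ 12 L g'(a)² / δ²`.
-/

open Set
open scoped NNReal

lemma mul_sub_le_sub_of_le_hasDerivAt {f f' : ℝ → ℝ} {a b m : ℝ}
    (hf : ∀ x ∈ Icc a b, HasDerivAt f (f' x) x) (hm : ∀ x ∈ Ioo a b, m ≤ f' x)
    {x y : ℝ} (hx : x ∈ Icc a b) (hy : y ∈ Icc a b) (hxy : x ≤ y) :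
    m * (y - x) ≤ f y - f x := by
  refine (convex_Icc a b).mul_sub_le_image_sub_of_le_deriv (HasDerivAt.continuousOn hf)
    (fun z hz => ?_) (fun z hz => ?_) x hx y hy hxy
  all_goals rw [interior_Icc] at hz
  · exact (hf z (Ioo_subset_Icc_self hz)).differentiableAt.differentiableWithinAt
  · rw [(hf z (Ioo_subset_Icc_self hz)).deriv]
    exact hm z hz

lemma mul_sq_div_two_le_sub_of_mul_sub_le {f f' : ℝ → ℝ} {c b δ : ℝ} (hcb : c ≤ b)
    (hf : ∀ x ∈ Icc c b, HasDerivAt f (f' x) x)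
    (hslope : ∀ x ∈ Icc c b, δ * (x - c) ≤ f' x - f' c) :
    δ * (b - c) ^ 2 / 2 ≤ f b - f c - f' c * (b - c) := by
  have hderiv : ∀ x ∈ Icc c b, HasDerivAt (fun t => f t - f' c * t - δ * (t - c) ^ 2 / 2)
      (f' x - f' c - δ * (x - c)) x := by
    intro x hx
    refine (((hf x hx).sub ((hasDerivAt_id x).const_mul (f' c))).sub
      ((((hasDerivAt_id x).sub_const c).pow 2).const_mul δ |>.div_const 2)).congr_deriv ?_
    simp only [id, mul_one, Nat.cast_ofNat]
    ring
  have := mul_sub_le_sub_of_le_hasDerivAt hderiv (m := 0)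
    (fun x hx => by linarith [hslope x (Ioo_subset_Icc_self hx)])
    (left_mem_Icc.2 hcb) (right_mem_Icc.2 hcb) hcb
  linarith

lemma sq_mul_sq_sub_le_six_mul_sq_of_deriv_eq_zero {g g' : ℝ → ℝ} {a b c δ : ℝ} (hδ : 0 ≤ δ)
    (hg : ∀ x ∈ Icc a b, HasDerivAt g (g' x) x) (hgab : g a = g b)
    (hslope : ∀ x ∈ Icc a b, ∀ y ∈ Icc a b, x ≤ y → δ * (y - x) ≤ g' y - g' x)
    (hc : c ∈ Icc a b) (hc0 : g' c = 0) :
    δ ^ 2 * (b - a) ^ 2 ≤ 6 * g' a ^ 2 := by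
  have haI : a ∈ Icc a b := left_mem_Icc.2 (hc.1.trans hc.2)
  have hac : Icc a c ⊆ Icc a b := Icc_subset_Icc_right hc.2
  have hcb : Icc c b ⊆ Icc a b := Icc_subset_Icc_left hc.1
  have h_left : δ * (c - a) ≤ -g' a := by
    simpa [hc0] using hslope a haI c hc hc.1
  have h_tangent : g' a * (c - a) ≤ g c - g a :=
    mul_sub_le_sub_of_le_hasDerivAt (fun x hx => hg x (hac hx))
      (fun x hx => by
        nlinarith [hslope a haI x (hac (Ioo_subset_Icc_self hx)) hx.1.le, hx.1])
      (left_mem_Icc.2 hc.1) (right_mem_Icc.2 hc.1) hc.1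
  have h_parabola : δ * (b - c) ^ 2 / 2 ≤ g b - g c := by
    simpa [hc0] using mul_sq_div_two_le_sub_of_mul_sub_le hc.2 (fun x hx => hg x (hcb hx))
      (fun x hx => hslope c hc x (hcb hx) hx.1)
  have hδca : 0 ≤ δ * (c - a) := mul_nonneg hδ (sub_nonneg.2 hc.1)
  have h_sq_left : δ ^ 2 * (c - a) ^ 2 ≤ g' a ^ 2 := by nlinarith
  have h_sq_right : δ ^ 2 * (b - c) ^ 2 ≤ 2 * g' a ^ 2 := by
    nlinarith [mul_le_mul_of_nonneg_left h_parabola hδ]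
  nlinarith [sq_nonneg ((c - a) - (b - c))]

lemma abs_sq_sub_sq_le_of_lipschitzOnWith {g g' g'' : ℝ → ℝ} {a b S : ℝ} {K : ℝ≥0}
    (hab : a ≤ b) (hg : ∀ x ∈ Icc a b, HasDerivAt g (g' x) x)
    (hg' : ∀ x ∈ Icc a b, HasDerivAt g' (g'' x) x) (hlip : LipschitzOnWith K g'' (Icc a b))
    (hgab : g a = g b) (hS : ∀ x ∈ Icc a b, |g' x| ≤ S) :
    |g' b ^ 2 - g' a ^ 2| ≤ 2 * S * K * (b - a) ^ 2 := by
  have haI : a ∈ Icc a b := left_mem_Icc.2 hab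
  have hderiv : ∀ x ∈ Icc a b, HasDerivWithinAt (fun t => g' t ^ 2 / 2 - g'' a * g t)
      (g' x * (g'' x - g'' a)) (Icc a b) x := by
    intro x hx
    refine ((((hg' x hx).pow 2).div_const 2).sub
      ((hg x hx).const_mul (g'' a))).hasDerivWithinAt.congr_deriv ?_
    simp only [Nat.cast_ofNat]
    ring
  have hbound : ∀ x ∈ Ico a b, ‖g' x * (g'' x - g'' a)‖ ≤ S * (K * (b - a)) := by
    intro x hx
    have hxI := Ico_subset_Icc_self hx
    have hlip_x : |g'' x - g'' a| ≤ K * (x - a) := by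
      simpa [Real.dist_eq, abs_of_nonneg (sub_nonneg.2 hx.1)] using
        hlip.dist_le_mul x hxI a haI
    rw [Real.norm_eq_abs, abs_mul]
    exact mul_le_mul (hS x hxI) (hlip_x.trans (by gcongr; exact hx.2.le)) (abs_nonneg _)
      ((abs_nonneg _).trans (hS a haI))
  have := norm_image_sub_le_of_norm_deriv_le_segment' hderiv hbound b (right_mem_Icc.2 hab)
  rw [Real.norm_eq_abs, hgab, show ∀ u v w : ℝ, u / 2 - w - (v / 2 - w) = (u - v) / 2 by
    intros; ring, abs_div, abs_two] at this
  linarith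

lemma abs_add_le_of_lipschitzOnWith {g g' g'' : ℝ → ℝ} {a b : ℝ} {K : ℝ≥0} (hab : a ≤ b)
    (hg : ∀ x ∈ Icc a b, HasDerivAt g (g' x) x)
    (hg' : ∀ x ∈ Icc a b, HasDerivAt g' (g'' x) x) (hlip : LipschitzOnWith K g'' (Icc a b))
    (hgab : g a = g b) (hmono : MonotoneOn g' (Icc a b)) (ha : g' a < 0) (hb : 0 < g' b) :
    |g' a + g' b| ≤ 2 * K * (b - a) ^ 2 := by
  have hS : ∀ x ∈ Icc a b, |g' x| ≤ g' b - g' a := fun x hx => by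
    have := hmono (left_mem_Icc.2 hab) hx hx.1
    have := hmono hx (right_mem_Icc.2 hab) hx.2
    rw [abs_le]
    constructor <;> linarith
  have h := abs_sq_sub_sq_le_of_lipschitzOnWith hab hg hg' hlip hgab hS
  rw [show g' b ^ 2 - g' a ^ 2 = (g' b - g' a) * (g' a + g' b) by ring, abs_mul,
    abs_of_pos (by linarith)] at h
  exact le_of_mul_le_mul_left (h.trans_eq (by ring)) (by linarith)

theorem stmt_8_general (R δ L M : ℝ) (hδ : 0 < δ) :
    ∃ C ε : ℝ, 0 < C ∧ 0 < ε ∧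
      ∀ (a b : ℝ) (g g' g'' : ℝ → ℝ), a < b →
        (∀ x ∈ Set.Icc a b, HasDerivAt g (g' x) x) →
        (∀ x ∈ Set.Icc a b, HasDerivAt g' (g'' x) x) →
        LipschitzOnWith (Real.toNNReal L) g'' (Set.Icc a b) →
        (∀ x ∈ Set.Icc a b, |g x| ≤ M ∧ |g' x| ≤ M ∧ |g'' x| ≤ M) →
        g a = R → g b = R →
        (∀ x ∈ Set.Ioo a b, g x < R) →
        (∀ x ∈ Set.Ioo a b, δ ≤ g'' x) →
        |g' a| < ε →
        |g' a + g' b| < C * (g' a) ^ 2 := by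
  refine ⟨12 * L.toNNReal / δ ^ 2 + 1, 1, by positivity, one_pos, ?_⟩
  intro a b g g' g'' hab hg hg' hlip _ ha hb _ hconv _
  have hgab : g a = g b := ha.trans hb.symm
  have hslope : ∀ x ∈ Icc a b, ∀ y ∈ Icc a b, x ≤ y → δ * (y - x) ≤ g' y - g' x :=
    fun x hx y hy => mul_sub_le_sub_of_le_hasDerivAt hg' hconv hx hy
  have hmono : StrictMonoOn g' (Icc a b) := fun x hx y hy hxy => by
    nlinarith [hslope x hx y hy hxy.le]
  obtain ⟨c, hc, hc0⟩ := exists_hasDerivAt_eq_zero hab (HasDerivAt.continuousOn hg) hgab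
    (fun x hx => hg x (Ioo_subset_Icc_self hx))
  have hga : g' a < 0 := hc0 ▸ hmono (left_mem_Icc.2 hab.le) (Ioo_subset_Icc_self hc) hc.1
  have hgb : 0 < g' b := hc0 ▸ hmono (Ioo_subset_Icc_self hc) (right_mem_Icc.2 hab.le) hc.2
  have hwidth := sq_mul_sq_sub_le_six_mul_sq_of_deriv_eq_zero hδ.le hg hgab hslope
    (Ioo_subset_Icc_self hc) hc0
  have hK : (0 : ℝ) ≤ L.toNNReal := NNReal.coe_nonneg _
  calc |g' a + g' b| ≤ 2 * L.toNNReal * (b - a) ^ 2 :=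
        abs_add_le_of_lipschitzOnWith hab.le hg hg' hlip hgab hmono.monotoneOn hga hgb
    _ ≤ 12 * L.toNNReal / δ ^ 2 * g' a ^ 2 := by
        rw [div_mul_eq_mul_div, le_div_iff₀ (by positivity)]
        nlinarith [mul_le_mul_of_nonneg_left hwidth hK]
    _ < (12 * L.toNNReal / δ ^ 2 + 1) * g' a ^ 2 := by
        nlinarith [pow_pos (neg_pos.2 hga) 2]

theorem stmt_8 (R δ L M : ℝ) (hR : 0 < R) (hδ : 0 < δ) (hL : 0 ≤ L) (hM : 0 ≤ M) :
    ∃ C ε : ℝ, 0 < C ∧ 0 < ε ∧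
      ∀ (a b : ℝ) (g g' g'' : ℝ → ℝ), a < b →
        (∀ x ∈ Set.Icc a b, HasDerivAt g (g' x) x) →
        (∀ x ∈ Set.Icc a b, HasDerivAt g' (g'' x) x) →
        LipschitzOnWith (Real.toNNReal L) g'' (Set.Icc a b) →
        (∀ x ∈ Set.Icc a b, |g x| ≤ M ∧ |g' x| ≤ M ∧ |g'' x| ≤ M) →
        g a = R → g b = R →
        (∀ x ∈ Set.Ioo a b, g x < R) →
        (∀ x ∈ Set.Ioo a b, δ ≤ g'' x) →
        |g' a| < ε →
        |g' a + g' b| < C * (g' a) ^ 2 :=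
  stmt_8_general R δ L M hδ
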